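/- arXiv:2511.15604 — 3 statements merged into one kernel-verified Lean document; each statement's English description precedes it below -/
import Mathlib

section
/- The assignment x_i ↦ x_i, (i,i+1) ↦ s_i := τ_i(x_i − x_{i+1}) − 1 defines a morphism of algebras from the smash product k[x_1,…,x_n] ⋊ S_n (with the symmetric group acting by permuting variables) to the nil affine Hecke algebra H_n. -/
open scoped TensorProduct

namespace NilHecke

variable (k : Type) [Field k]

/-- Relations of the nil affine Hecke algebra `H n` (0-based indices: generators
`x_0,…,x_{n-1}` and `τ_0,…,τ_{n-2}`; out-of-range generators are killed). -/
inductive Rel (n : ℕ) : FreeAlgebra k (ℕ ⊕ ℕ) → FreeAlgebra k (ℕ ⊕ ℕ) → Prop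
  | xkill (i : ℕ) (h : n ≤ i) : Rel n (FreeAlgebra.ι k (.inl i)) 0
  | tkill (i : ℕ) (h : n ≤ i + 1) : Rel n (FreeAlgebra.ι k (.inr i)) 0
  | tsq (i : ℕ) : Rel n (FreeAlgebra.ι k (.inr i) * FreeAlgebra.ι k (.inr i)) 0
  | braid (i : ℕ) :
      Rel n (FreeAlgebra.ι k (.inr i) * FreeAlgebra.ι k (.inr (i+1)) * FreeAlgebra.ι k (.inr i))
        (FreeAlgebra.ι k (.inr (i+1)) * FreeAlgebra.ι k (.inr i) * FreeAlgebra.ι k (.inr (i+1)))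
  | tcomm (i j : ℕ) (h : i + 1 < j) :
      Rel n (FreeAlgebra.ι k (.inr i) * FreeAlgebra.ι k (.inr j))
        (FreeAlgebra.ι k (.inr j) * FreeAlgebra.ι k (.inr i))
  | xcomm (i j : ℕ) :
      Rel n (FreeAlgebra.ι k (.inl i) * FreeAlgebra.ι k (.inl j))
        (FreeAlgebra.ι k (.inl j) * FreeAlgebra.ι k (.inl i))
  | txcomm (i j : ℕ) (h1 : j ≠ i) (h2 : j ≠ i + 1) :
      Rel n (FreeAlgebra.ι k (.inr i) * FreeAlgebra.ι k (.inl j))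
        (FreeAlgebra.ι k (.inl j) * FreeAlgebra.ι k (.inr i))
  | tx (i : ℕ) (h : i + 1 < n) :
      Rel n (FreeAlgebra.ι k (.inr i) * FreeAlgebra.ι k (.inl i)
          - FreeAlgebra.ι k (.inl (i+1)) * FreeAlgebra.ι k (.inr i)) 1
  | xt (i : ℕ) (h : i + 1 < n) :
      Rel n (FreeAlgebra.ι k (.inl i) * FreeAlgebra.ι k (.inr i)
          - FreeAlgebra.ι k (.inr i) * FreeAlgebra.ι k (.inl (i+1))) 1

/-- The nil affine Hecke algebra on `n` strands over `k`. -/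
def H (n : ℕ) : Type := RingQuot (Rel k n)

instance (n : ℕ) : Ring (H k n) := inferInstanceAs (Ring (RingQuot (Rel k n)))

instance (n : ℕ) : Algebra k (H k n) := inferInstanceAs (Algebra k (RingQuot (Rel k n)))

/-- The polynomial generator `x_{i+1}` (0-based `x_i`). -/
def X (n i : ℕ) : H k n := RingQuot.mkAlgHom k (Rel k n) (FreeAlgebra.ι k (.inl i))

/-- The nil Hecke generator `τ_{i+1}` (0-based `τ_i`). -/
def T (n i : ℕ) : H k n := RingQuot.mkAlgHom k (Rel k n) (FreeAlgebra.ι k (.inr i))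

/-- The element `s_i = τ_i (x_i - x_{i+1}) - 1`. -/
def s (n i : ℕ) : H k n := T k n i * (X k n i - X k n (i+1)) - 1

/-- The ascending product `τ_a τ_{a+1} ⋯ τ_{b-1}` (0-based). -/
def chain (n a b : ℕ) : H k n := (List.map (T k n) (List.range' a (b - a))).prod

theorem X_kill (n i : ℕ) (h : n ≤ i) : X k n i = 0 := by
  have h' := RingQuot.mkAlgHom_rel k (Rel.xkill (k := k) (n := n) i h)
  simp only [map_zero] at h'
  exact h'

theorem T_kill (n i : ℕ) (h : n ≤ i + 1) : T k n i = 0 := by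
  have h' := RingQuot.mkAlgHom_rel k (Rel.tkill (k := k) (n := n) i h)
  simp only [map_zero] at h'
  exact h'

theorem T_sq (n i : ℕ) : T k n i * T k n i = 0 := by
  have h' := RingQuot.mkAlgHom_rel k (Rel.tsq (k := k) (n := n) i)
  simp only [map_mul, map_zero] at h'
  exact h'

theorem T_braid (n i : ℕ) :
    T k n i * T k n (i+1) * T k n i = T k n (i+1) * T k n i * T k n (i+1) := by
  have h' := RingQuot.mkAlgHom_rel k (Rel.braid (k := k) (n := n) i)
  simp only [map_mul] at h'
  exact h'

theorem T_comm (n i j : ℕ) (h : i + 1 < j) : T k n i * T k n j = T k n j * T k n i := by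
  have h' := RingQuot.mkAlgHom_rel k (Rel.tcomm (k := k) (n := n) i j h)
  simp only [map_mul] at h'
  exact h'

theorem X_comm (n i j : ℕ) : X k n i * X k n j = X k n j * X k n i := by
  have h' := RingQuot.mkAlgHom_rel k (Rel.xcomm (k := k) (n := n) i j)
  simp only [map_mul] at h'
  exact h'

theorem TX_comm (n i j : ℕ) (h1 : j ≠ i) (h2 : j ≠ i + 1) :
    T k n i * X k n j = X k n j * T k n i := by
  have h' := RingQuot.mkAlgHom_rel k (Rel.txcomm (k := k) (n := n) i j h1 h2)
  simp only [map_mul] at h'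
  exact h'

theorem TX (n i : ℕ) (h : i + 1 < n) :
    T k n i * X k n i - X k n (i+1) * T k n i = 1 := by
  have h' := RingQuot.mkAlgHom_rel k (Rel.tx (k := k) (n := n) i h)
  simp only [map_mul, map_sub, map_one] at h'
  exact h'

theorem XT (n i : ℕ) (h : i + 1 < n) :
    X k n i * T k n i - T k n i * X k n (i+1) = 1 := by
  have h' := RingQuot.mkAlgHom_rel k (Rel.xt (k := k) (n := n) i h)
  simp only [map_mul, map_sub, map_one] at h'
  exact h'

/-- The inclusion `H m → H n` for `m ≤ n`. -/
def incl (m n : ℕ) (h : m ≤ n) : H k m →ₐ[k] H k n :=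
  RingQuot.liftAlgHom k ⟨FreeAlgebra.lift k (fun g =>
    match g with
    | .inl i => if i < m then X k n i else 0
    | .inr i => if i + 1 < m then T k n i else 0), by
      rintro a b r
      induction r with
      | xkill i h' => simp only [FreeAlgebra.lift_ι_apply, map_zero]; rw [if_neg (by omega)]
      | tkill i h' => simp only [FreeAlgebra.lift_ι_apply, map_zero]; rw [if_neg (by omega)]
      | tsq i =>
          simp only [map_mul, FreeAlgebra.lift_ι_apply, map_zero]
          split_ifs <;> simp [T_sq]
      | braid i =>
          simp only [map_mul, FreeAlgebra.lift_ι_apply]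
          split_ifs <;> simp [T_braid]
      | tcomm i j h' =>
          simp only [map_mul, FreeAlgebra.lift_ι_apply]
          split_ifs <;> simp [T_comm k n i j h']
      | xcomm i j =>
          simp only [map_mul, FreeAlgebra.lift_ι_apply]
          split_ifs <;> simp [X_comm k n i j]
      | txcomm i j h1 h2 =>
          simp only [map_mul, FreeAlgebra.lift_ι_apply]
          split_ifs <;> simp [TX_comm k n i j h1 h2]
      | tx i h' =>
          simp only [map_sub, map_mul, map_one, FreeAlgebra.lift_ι_apply]
          rw [if_pos h', if_pos (by omega : i < m), if_pos (by omega : i + 1 < m)]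
          exact TX k n i (by omega)
      | xt i h' =>
          simp only [map_sub, map_mul, map_one, FreeAlgebra.lift_ι_apply]
          rw [if_pos (by omega : i < m), if_pos h', if_pos h']
          exact XT k n i (by omega)⟩

/-- The shift embedding `H m → H n` (sending `x_i ↦ x_{i+1}`, `τ_i ↦ τ_{i+1}`). -/
def shj (m n : ℕ) (h : m + 1 ≤ n ∨ m = 0) : H k m →ₐ[k] H k n :=
  RingQuot.liftAlgHom k ⟨FreeAlgebra.lift k (fun g =>
    match g with
    | .inl i => if i < m then X k n (i+1) else 0
    | .inr i => if i + 1 < m then T k n (i+1) else 0), by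
      rintro a b r
      induction r with
      | xkill i h' => simp only [FreeAlgebra.lift_ι_apply, map_zero]; rw [if_neg (by omega)]
      | tkill i h' => simp only [FreeAlgebra.lift_ι_apply, map_zero]; rw [if_neg (by omega)]
      | tsq i =>
          simp only [map_mul, FreeAlgebra.lift_ι_apply, map_zero]
          split_ifs <;> simp [T_sq]
      | braid i =>
          simp only [map_mul, FreeAlgebra.lift_ι_apply]
          split_ifs <;> simp [T_braid]
      | tcomm i j h' =>
          simp only [map_mul, FreeAlgebra.lift_ι_apply]
          split_ifs <;> simp [T_comm k n (i+1) (j+1) (by omega)]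
      | xcomm i j =>
          simp only [map_mul, FreeAlgebra.lift_ι_apply]
          split_ifs <;> simp [X_comm k n (i+1) (j+1)]
      | txcomm i j h1 h2 =>
          simp only [map_mul, FreeAlgebra.lift_ι_apply]
          split_ifs <;> simp [TX_comm k n (i+1) (j+1) (by omega) (by omega)]
      | tx i h' =>
          simp only [map_sub, map_mul, map_one, FreeAlgebra.lift_ι_apply]
          rw [if_pos h', if_pos (by omega : i < m), if_pos (by omega : i + 1 < m)]
          exact TX k n (i+1) (by omega)
      | xt i h' =>
          simp only [map_sub, map_mul, map_one, FreeAlgebra.lift_ι_apply]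
          rw [if_pos (by omega : i < m), if_pos h', if_pos h']
          exact XT k n (i+1) (by omega)⟩

end NilHecke

/-!
The elements `s_i` satisfy the Coxeter relations of type `A` (`s_i² = 1`, the braid relation and
far commutation) together with `s_i x_j = x_{t_i(j)} s_i`, where `t_i = (i, i+1)`; each of these
is a direct expansion in the nil Hecke relations. So `ρ` comes from the Coxeter presentation of
`S_n` by the `t_i`, which is proved by induction on `n`. Given `ρ'` on the permutations of
`{0, …, n}` fixing `0` and elements `g_i` satisfying the relations, write `σ = c_p e` with
`c_p = t_{p-1} ⋯ t_0` the cycle `0 ↦ 1 ↦ ⋯ ↦ p ↦ 0` and `e(0) = 0`, and put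
`ρ(σ) = g_{p-1} ⋯ g_0 ρ'(e)`. The relations alone give `ρ(t_i σ) = g_i ρ(σ)` (by cases on the
position of `i` relative to `p`), and this forces `ρ` to be multiplicative.
-/

open Equiv

section NilHeckeReflection

variable {R : Type*} [Ring R]

/- The identities below expand both sides into right-associated words and use the relations as
rewrite rules moving `a` and `b` to the right; this lemma lets a relation fire inside a word. -/
theorem mul_mul_eq_of_mul_eq {a b c : R} (h : a * b = c) (d : R) : a * (b * d) = c * d := by
  rw [← mul_assoc, h]

/-- For `a = τ_i`, `u = x_i`, `v = x_{i+1}` this is `s_i`. -/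
def nilHeckeReflection (a u v : R) : R := a * (u - v) - 1

variable {a b u v w : R}

theorem nilHeckeReflection_mul_self (hu : a * u = v * a + 1) (hv : a * v = u * a - 1)
    (ha : a * a = 0) (huv : Commute u v) :
    nilHeckeReflection a u v * nilHeckeReflection a u v = 1 := by
  simp only [nilHeckeReflection, mul_sub, sub_mul, mul_one, one_mul, mul_assoc]
  simp only [mul_mul_eq_of_mul_eq hu, mul_mul_eq_of_mul_eq hv, huv.symm.left_comm, hu, hv, ha,
    mul_sub, sub_mul, mul_add, add_mul, mul_one, one_mul, mul_zero, mul_assoc]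
  noncomm_ring

theorem nilHeckeReflection_mul_left (hu : a * u = v * a + 1) (hv : a * v = u * a - 1)
    (huv : Commute u v) : nilHeckeReflection a u v * u = v * nilHeckeReflection a u v := by
  simp only [nilHeckeReflection, mul_sub, sub_mul, mul_one, one_mul, mul_assoc]
  simp only [mul_mul_eq_of_mul_eq hu, huv.symm.left_comm, huv.symm.eq, hu, hv, mul_sub,
    mul_add, add_mul, mul_one, one_mul, mul_assoc]
  noncomm_ring

theorem nilHeckeReflection_mul_right (hu : a * u = v * a + 1) (hv : a * v = u * a - 1)
    (huv : Commute u v) : nilHeckeReflection a u v * v = u * nilHeckeReflection a u v := by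
  simp only [nilHeckeReflection, mul_sub, sub_mul, mul_one, one_mul, mul_assoc]
  simp only [mul_mul_eq_of_mul_eq hu, mul_mul_eq_of_mul_eq hv, huv.symm.left_comm, hu, hv,
    mul_sub, sub_mul, mul_add, add_mul, mul_one, one_mul, mul_assoc]
  noncomm_ring

theorem Commute.nilHeckeReflection_left {z : R} (ha : Commute a z) (hu : Commute u z)
    (hv : Commute v z) : Commute (nilHeckeReflection a u v) z :=
  (ha.mul_left (hu.sub_left hv)).sub_left (Commute.one_left z)

theorem nilHeckeReflection_braid (hab : a * b * a = b * a * b) (ha : a * a = 0) (hb : b * b = 0)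
    (hau : a * u = v * a + 1) (hav : a * v = u * a - 1) (haw : Commute a w)
    (hbv : b * v = w * b + 1) (hbw : b * w = v * b - 1) (hbu : Commute b u)
    (huv : Commute u v) (huw : Commute u w) (hvw : Commute v w) :
    nilHeckeReflection a u v * nilHeckeReflection b v w * nilHeckeReflection a u v =
      nilHeckeReflection b v w * nilHeckeReflection a u v * nilHeckeReflection b v w := by
  have hba : b * (a * b) = a * (b * a) := by rw [← mul_assoc, ← hab, mul_assoc]
  simp only [nilHeckeReflection, mul_sub, sub_mul, mul_one, one_mul, mul_assoc]
  simp only [mul_mul_eq_of_mul_eq hau, mul_mul_eq_of_mul_eq hav, haw.left_comm,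
    mul_mul_eq_of_mul_eq hbv, mul_mul_eq_of_mul_eq hbw, hbu.left_comm,
    huv.symm.left_comm, huw.symm.left_comm, hvw.symm.left_comm,
    hau, hav, hbv, hbw, ha, hb, hba, mul_sub, sub_mul, mul_add, add_mul, mul_one, one_mul,
    mul_zero, mul_assoc]
  noncomm_ring

end NilHeckeReflection

section TypeAPresentation

variable {G : Type*} [Monoid G]

def adjSwap (m i : ℕ) : Perm (Fin m) :=
  if h : i + 1 < m then swap ⟨i, by omega⟩ ⟨i + 1, h⟩ else 1

theorem adjSwap_of_lt {m i : ℕ} (h : i + 1 < m) :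
    adjSwap m i = swap ⟨i, by omega⟩ ⟨i + 1, h⟩ :=
  dif_pos h

theorem adjSwap_induction {m : ℕ} {motive : Perm (Fin m) → Prop} (one : motive 1)
    (adjSwap_mul : ∀ i σ, i + 1 < m → motive σ → motive (adjSwap m i * σ)) (σ : Perm (Fin m)) :
    motive σ := by
  cases m with
  | zero => rwa [Subsingleton.elim σ 1]
  | succ n =>
    have hσ : σ ∈ Submonoid.closure (Set.range fun i : Fin n => swap i.castSucc i.succ) := by
      rw [Perm.mclosure_swap_castSucc_succ]; trivial
    induction hσ using Submonoid.closure_induction_left with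
    | one => exact one
    | mul_left _ hx τ _ hτ =>
      obtain ⟨i, rfl⟩ := hx
      have := adjSwap_mul i τ (Nat.succ_lt_succ i.isLt) hτ
      rwa [adjSwap_of_lt] at this

theorem map_mul_of_map_adjSwap_mul {m : ℕ} {f : Perm (Fin m) → G} {g : ℕ → G} (hone : f 1 = 1)
    (hmul : ∀ {i}, i + 1 < m → ∀ σ, f (adjSwap m i * σ) = g i * f σ) (σ τ : Perm (Fin m)) :
    f (σ * τ) = f σ * f τ := by
  induction σ using adjSwap_induction with
  | one => rw [one_mul, hone, one_mul]
  | adjSwap_mul i σ hi ih => rw [mul_assoc, hmul hi, ih, hmul hi, mul_assoc]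

/-- The Coxeter relations of type `A_{m-1}` on `g 0, …, g (m - 2)`. -/
structure TypeARelations (m : ℕ) (g : ℕ → G) : Prop where
  mul_self : ∀ i, i + 1 < m → g i * g i = 1
  braid : ∀ i, i + 2 < m → g i * g (i + 1) * g i = g (i + 1) * g i * g (i + 1)
  commute : ∀ i j, i + 1 < j → j + 1 < m → Commute (g i) (g j)

theorem typeARelations_adjSwap (m : ℕ) : TypeARelations m (adjSwap m) where
  mul_self i h := by rw [adjSwap_of_lt h, swap_mul_self]
  braid i h := by
    rw [adjSwap_of_lt h, adjSwap_of_lt (by omega : i + 1 < m),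
      swap_mul_swap_mul_swap (by rw [Ne, Fin.mk.injEq]; omega) (by rw [Ne, Fin.mk.injEq]; omega),
      swap_comm (⟨i, _⟩ : Fin m), swap_comm (⟨i + 1, _⟩ : Fin m) ⟨i + 1 + 1, h⟩,
      swap_mul_swap_mul_swap (by rw [Ne, Fin.mk.injEq]; omega) (by rw [Ne, Fin.mk.injEq]; omega),
      swap_comm]
  commute i j hij hj := by
    rw [adjSwap_of_lt (by omega : i + 1 < m), adjSwap_of_lt hj]
    exact (Perm.disjoint_swap_swap (by simp [Fin.ext_iff]; omega)).commute

/-- For `g = adjSwap m` this is the cycle `0 ↦ 1 ↦ ⋯ ↦ p ↦ 0`. -/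
def cycleWord (g : ℕ → G) : ℕ → G
  | 0 => 1
  | p + 1 => g p * cycleWord g p

namespace TypeARelations

variable {m : ℕ} {g : ℕ → G}

theorem shift (h : TypeARelations (m + 1) g) : TypeARelations m (fun i => g (i + 1)) where
  mul_self i hi := h.mul_self (i + 1) (by omega)
  braid i hi := h.braid (i + 1) (by omega)
  commute i j hij hj := h.commute (i + 1) (j + 1) (by omega) (by omega)

theorem commute_cycleWord (h : TypeARelations m g) {i p : ℕ} (hpi : p < i) (hi : i + 1 < m) :
    Commute (g i) (cycleWord g p) := by
  induction p with
  | zero => exact Commute.one_right _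
  | succ p ih => exact (h.commute p i (by omega) hi).symm.mul_right (ih (by omega))

theorem mul_cycleWord_succ (h : TypeARelations m g) {i : ℕ} (hi : i + 1 < m) :
    g i * cycleWord g (i + 1) = cycleWord g i := by
  rw [cycleWord, ← mul_assoc, h.mul_self i hi, one_mul]

theorem mul_cycleWord (h : TypeARelations m g) {i p : ℕ} (hip : i + 1 < p) (hp : p < m) :
    g i * cycleWord g p = cycleWord g p * g (i + 1) := by
  induction p with
  | zero => omega
  | succ p ih =>
    rcases (show i + 1 = p ∨ i + 1 < p by omega) with rfl | hip'
    · calc g i * cycleWord g (i + 1 + 1)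
          = g i * g (i + 1) * g i * cycleWord g i := by simp only [cycleWord, mul_assoc]
        _ = g (i + 1) * g i * (g (i + 1) * cycleWord g i) := by
          rw [h.braid i (by omega)]; simp only [mul_assoc]
        _ = cycleWord g (i + 1 + 1) * g (i + 1) := by
          rw [(h.commute_cycleWord (lt_add_one i) (by omega)).eq]; simp only [cycleWord, mul_assoc]
    · calc g i * cycleWord g (p + 1) = g p * (g i * cycleWord g p) := by
            rw [cycleWord, (h.commute i p hip' (by omega)).left_comm]
        _ = cycleWord g (p + 1) * g (i + 1) := by rw [ih hip' (by omega), cycleWord, mul_assoc]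

end TypeARelations

def permSucc (n : ℕ) : Perm (Fin n) →* Perm (Fin (n + 1)) where
  toFun e := Perm.decomposeFin.symm (0, e)
  map_one' := (Perm.decomposeFin_symm_of_one 0).trans (swap_self 0)
  map_mul' e e' := by
    ext x
    refine Fin.cases ?_ (fun y => ?_) x <;> simp [Perm.mul_apply]

section PermSucc

variable {n : ℕ}

theorem permSucc_apply_zero (e : Perm (Fin n)) : permSucc n e 0 = 0 :=
  Perm.decomposeFin_symm_apply_zero 0 e

theorem permSucc_apply_succ (e : Perm (Fin n)) (x : Fin n) : permSucc n e x.succ = (e x).succ := by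
  simp [permSucc]

theorem permSucc_adjSwap (i : ℕ) : permSucc n (adjSwap n i) = adjSwap (n + 1) (i + 1) := by
  by_cases hi : i + 1 < n
  · rw [adjSwap_of_lt hi, adjSwap_of_lt (by omega : i + 1 + 1 < n + 1)]
    ext x
    refine Fin.cases ?_ (fun y => ?_) x
    · rw [permSucc_apply_zero, swap_apply_of_ne_of_ne (Fin.ne_of_val_ne (by simp))
        (Fin.ne_of_val_ne (by simp))]
    · rw [permSucc_apply_succ, ← Fin.succ_mk, ← Fin.succ_mk, (Fin.succ_injective n).swap_apply]
  · rw [adjSwap, dif_neg hi, adjSwap, dif_neg (by omega), map_one]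

theorem permSucc_decomposeFin_snd {τ : Perm (Fin (n + 1))} (hτ : τ 0 = 0) :
    permSucc n (Perm.decomposeFin τ).2 = τ := by
  have h := Perm.decomposeFin_symm_apply_zero (Perm.decomposeFin τ).1 (Perm.decomposeFin τ).2
  rw [Prod.mk.eta, Equiv.symm_apply_apply, hτ] at h
  change Perm.decomposeFin.symm (0, _) = τ
  rw [h, Prod.mk.eta, Equiv.symm_apply_apply]

theorem cycleWord_adjSwap_apply_zero {p : ℕ} (hp : p < n + 1) :
    cycleWord (adjSwap (n + 1)) p 0 = ⟨p, hp⟩ := by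
  induction p with
  | zero => rfl
  | succ p ih => rw [cycleWord, Perm.mul_apply, ih (by omega), adjSwap_of_lt hp, swap_apply_left]

theorem exists_cycleWord_mul_permSucc (σ : Perm (Fin (n + 1))) :
    ∃ p < n + 1, ∃ e, cycleWord (adjSwap (n + 1)) p * permSucc n e = σ := by
  set c := cycleWord (adjSwap (n + 1)) (σ 0)
  have hτ : (c⁻¹ * σ) 0 = 0 := by
    rw [Perm.mul_apply, Perm.inv_eq_iff_eq, cycleWord_adjSwap_apply_zero (σ 0).isLt, Fin.eta]
  exact ⟨σ 0, (σ 0).isLt, _, by rw [permSucc_decomposeFin_snd hτ, mul_inv_cancel_left]⟩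

end PermSucc

/-- Extension of `φ : S_n → G` to `S_{n+1}` along the coset decomposition
`σ = cycleWord (adjSwap (n + 1)) (σ 0) * permSucc n e`. -/
def extendAlongCosets {n : ℕ} (g : ℕ → G) (φ : Perm (Fin n) →* G) (σ : Perm (Fin (n + 1))) : G :=
  cycleWord g (σ 0) * φ (Perm.decomposeFin ((cycleWord (adjSwap (n + 1)) (σ 0))⁻¹ * σ)).2

section ExtendAlongCosets

variable {n : ℕ} {g : ℕ → G} {φ : Perm (Fin n) →* G}

theorem extendAlongCosets_cycleWord_mul_permSucc {p : ℕ} (hp : p < n + 1) (e : Perm (Fin n)) :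
    extendAlongCosets g φ (cycleWord (adjSwap (n + 1)) p * permSucc n e) = cycleWord g p * φ e := by
  have h0 : ((cycleWord (adjSwap (n + 1)) p * permSucc n e) 0 : ℕ) = p := by
    rw [Perm.mul_apply, permSucc_apply_zero, cycleWord_adjSwap_apply_zero hp]
  rw [extendAlongCosets, h0, inv_mul_cancel_left]
  simp [permSucc]

theorem extendAlongCosets_one : extendAlongCosets g φ 1 = 1 := by
  have h := extendAlongCosets_cycleWord_mul_permSucc (g := g) (φ := φ) (Nat.succ_pos n) 1
  simpa [cycleWord] using h

theorem extendAlongCosets_adjSwap_mul (hg : TypeARelations (n + 1) g)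
    (hφ : ∀ i, i + 1 < n → φ (adjSwap n i) = g (i + 1)) {i : ℕ} (hi : i + 1 < n + 1)
    (σ : Perm (Fin (n + 1))) :
    extendAlongCosets g φ (adjSwap (n + 1) i * σ) = g i * extendAlongCosets g φ σ := by
  obtain ⟨p, hp, e, rfl⟩ := exists_cycleWord_mul_permSucc σ
  have hs := typeARelations_adjSwap (n + 1)
  rw [extendAlongCosets_cycleWord_mul_permSucc hp, ← mul_assoc]
  rcases (show i + 1 < p ∨ i + 1 = p ∨ i = p ∨ p < i by omega) with hip | rfl | rfl | hpi
  · rw [hs.mul_cycleWord hip hp, mul_assoc, ← permSucc_adjSwap, ← map_mul,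
      extendAlongCosets_cycleWord_mul_permSucc hp, map_mul, hφ i (by omega), ← mul_assoc,
      ← hg.mul_cycleWord hip hp, mul_assoc]
  · rw [hs.mul_cycleWord_succ hi, extendAlongCosets_cycleWord_mul_permSucc (by omega), ← mul_assoc,
      hg.mul_cycleWord_succ hi]
  · exact (extendAlongCosets_cycleWord_mul_permSucc hi e).trans (mul_assoc _ _ _)
  · obtain ⟨j, rfl⟩ : ∃ j, i = j + 1 := ⟨i - 1, by omega⟩
    rw [(hs.commute_cycleWord hpi hi).eq, mul_assoc, ← permSucc_adjSwap, ← map_mul,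
      extendAlongCosets_cycleWord_mul_permSucc hp, map_mul, hφ j (by omega), ← mul_assoc,
      ← (hg.commute_cycleWord hpi hi).eq, mul_assoc]

def extendAlongCosetsHom (hg : TypeARelations (n + 1) g)
    (hφ : ∀ i, i + 1 < n → φ (adjSwap n i) = g (i + 1)) : Perm (Fin (n + 1)) →* G where
  toFun := extendAlongCosets g φ
  map_one' := extendAlongCosets_one
  map_mul' := map_mul_of_map_adjSwap_mul extendAlongCosets_one (extendAlongCosets_adjSwap_mul hg hφ)

end ExtendAlongCosets

theorem TypeARelations.exists_monoidHom_perm {m : ℕ} {g : ℕ → G} (h : TypeARelations m g) :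
    ∃ φ : Perm (Fin m) →* G, ∀ i, i + 1 < m → φ (adjSwap m i) = g i := by
  induction m generalizing g with
  | zero => exact ⟨1, fun i hi => absurd hi (by omega)⟩
  | succ n ih =>
    obtain ⟨φ, hφ⟩ := ih h.shift
    refine ⟨extendAlongCosetsHom h hφ, fun i hi => ?_⟩
    simpa [extendAlongCosetsHom, extendAlongCosets_one] using
      extendAlongCosets_adjSwap_mul h hφ hi 1

end TypeAPresentation

namespace NilHecke

variable {k : Type} [Field k] {n i j : ℕ}

theorem T_mul_X_self (h : i + 1 < n) : T k n i * X k n i = X k n (i + 1) * T k n i + 1 :=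
  sub_eq_iff_eq_add'.mp (TX k n i h)

theorem T_mul_X_succ (h : i + 1 < n) : T k n i * X k n (i + 1) = X k n i * T k n i - 1 := by
  rw [← XT k n i h, sub_sub_cancel]

theorem commute_X_X : Commute (X k n i) (X k n j) :=
  X_comm k n i j

theorem commute_T_X (h1 : j ≠ i) (h2 : j ≠ i + 1) : Commute (T k n i) (X k n j) :=
  TX_comm k n i j h1 h2

theorem commute_T_T (h : i + 1 < j) : Commute (T k n i) (T k n j) :=
  T_comm k n i j h

theorem commute_s_X (h1 : j ≠ i) (h2 : j ≠ i + 1) : Commute (s k n i) (X k n j) :=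
  (commute_T_X h1 h2).nilHeckeReflection_left commute_X_X commute_X_X

theorem commute_s_T (h : i + 1 < j) : Commute (s k n i) (T k n j) :=
  (commute_T_T h).nilHeckeReflection_left (commute_T_X (by omega) (by omega)).symm
    (commute_T_X (by omega) (by omega)).symm

theorem commute_s_s (h : i + 1 < j) : Commute (s k n i) (s k n j) :=
  ((commute_s_T h).symm.nilHeckeReflection_left (commute_s_X (by omega) (by omega)).symm
    (commute_s_X (by omega) (by omega)).symm).symm

theorem s_mul_self (h : i + 1 < n) : s k n i * s k n i = 1 :=
  nilHeckeReflection_mul_self (T_mul_X_self h) (T_mul_X_succ h) (T_sq k n i) commute_X_X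

theorem s_braid (h : i + 2 < n) :
    s k n i * s k n (i + 1) * s k n i = s k n (i + 1) * s k n i * s k n (i + 1) :=
  nilHeckeReflection_braid (T_braid k n i) (T_sq k n i) (T_sq k n (i + 1))
    (T_mul_X_self (by omega)) (T_mul_X_succ (by omega)) (commute_T_X (by omega) (by omega))
    (T_mul_X_self h) (T_mul_X_succ h) (commute_T_X (by omega) (by omega))
    commute_X_X commute_X_X commute_X_X

theorem typeARelations_s : TypeARelations n (s k n) where
  mul_self _ h := s_mul_self h
  braid _ h := s_braid h
  commute _ _ h _ := commute_s_s h

theorem s_mul_X (h : i + 1 < n) (j : Fin n) :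
    s k n i * X k n j = X k n (adjSwap n i j) * s k n i := by
  rw [adjSwap_of_lt h]
  by_cases hji : (j : ℕ) = i
  · rw [show j = ⟨i, by omega⟩ from Fin.ext hji, swap_apply_left]
    exact nilHeckeReflection_mul_left (T_mul_X_self h) (T_mul_X_succ h) commute_X_X
  by_cases hji' : (j : ℕ) = i + 1
  · rw [show j = ⟨i + 1, h⟩ from Fin.ext hji', swap_apply_right]
    exact nilHeckeReflection_mul_right (T_mul_X_self h) (T_mul_X_succ h) commute_X_X
  rw [swap_apply_of_ne_of_ne (Fin.ne_of_val_ne hji) (Fin.ne_of_val_ne hji')]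
  exact (commute_s_X hji hji').eq

/-- By the universal property of the smash product, an algebra morphism
`k[x_1,…,x_n] ⋊ S_n → H_n` extending `x_i ↦ x_i` is exactly a multiplicative `ρ : S_n → H_n`
with `ρ(σ) x_j = x_{σ(j)} ρ(σ)`; the morphism then sends `p ⋊ σ ↦ p(x) ρ(σ)`. -/
theorem exists_smash_morphism (k : Type) [Field k] (n : ℕ) :
    ∃ ρ : Equiv.Perm (Fin n) →* H k n,
      (∀ (i : Fin n) (h : (i : ℕ) + 1 < n),
        ρ (Equiv.swap i ⟨(i : ℕ) + 1, h⟩) = s k n i) ∧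
      (∀ (σ : Equiv.Perm (Fin n)) (j : Fin n),
        ρ σ * X k n j = X k n (σ j) * ρ σ) := by
  obtain ⟨ρ, hρ⟩ := (typeARelations_s (k := k) (n := n)).exists_monoidHom_perm
  refine ⟨ρ, fun i h => ?_, fun σ => ?_⟩
  · simpa only [adjSwap_of_lt h, Fin.eta] using hρ i h
  induction σ using adjSwap_induction with
  | one => simp
  | adjSwap_mul i σ hi ih =>
    intro j
    rw [map_mul, hρ i hi, mul_assoc, ih, ← mul_assoc, s_mul_X hi, mul_assoc, Perm.mul_apply]

end NilHecke
end

section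
/- Let Δ̃_n = Σ_{r=1}^{n} (τ_r τ_{r+1} ⋯ τ_{n−1}) ⊗ (τ_1 τ_2 ⋯ τ_{r−1}) ∈ H_n[y] ⊗_{H_{n−1}[y]} ι_1 H_n, and let Δ_n be its image in H_n ι_0 ⊗_{H_{n−1}[y]} ι_1 H_n, where ι_0 : H_{n−1}[y] → H_n sends x_i ↦ x_i, τ_i ↦ τ_i, y ↦ x_n, and ι_1 : H_{n−1}[y] → H_n sends x_i ↦ x_{i+1}, τ_i ↦ τ_{i+1}, y ↦ x_1. Then a·Δ_n = Δ_n·a for all a ∈ H_n, where the left and right H_n-module structures on H_n ι_0 ⊗_{H_{n−1}[y]} ι_1 H_n come from left multiplication on the first factor and right multiplication on the second factor respectively. -/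
/-!
The elements `a` with `a Δ ≡ Δ a` form a subalgebra of `H_n`: the balancing relations are stable
under left multiplication on the first factor and right multiplication on the second, and
`(ab) Δ - Δ (ab) = a (b Δ - Δ b) + (a Δ - Δ a) b`. So it suffices to treat the generators.

Moving `τ_j` through the chains `τ_r ⋯ τ_{n-1}` and across the tensor sign
(`τ_i ⊗ 1 ≡ 1 ⊗ τ_{i+1}`) turns the `r`-th summand of `τ_j Δ` into the `σ r`-th summand of
`Δ τ_j`, where `σ` is the transposition of `j` and `j + 1`; the two summands killed by `τ_j² = 0`
pair off. For `x_j` the same manipulation, now using `x_{i+1} τ_i = τ_i x_i - 1`, leaves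
correction terms `τ_a ⋯ τ_{m-1} τ_{m+1} ⋯ τ_b`; those of the summand `r = j`, which crosses the
tensor sign as `x_n ⊗ 1 ≡ 1 ⊗ x_1`, cancel exactly against those of all other summands.
-/

open scoped TensorProduct

namespace NilHecke

variable (k : Type) [Field k]

/-- `ι_0 : H_{n−1}[y] → H_n`, sending `x_i ↦ x_i`, `τ_i ↦ τ_i`, `y ↦ x_n`
(0-based: `y ↦ x_{n-1}`, the last variable). -/
def iota0 (n : ℕ) (p : Polynomial (H k (n-1))) : H k n :=
  p.sum fun i a => incl k (n-1) n (Nat.sub_le n 1) a * X k n (n-1) ^ i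

/-- `ι_1 : H_{n−1}[y] → H_n`, sending `x_i ↦ x_{i+1}`, `τ_i ↦ τ_{i+1}`, `y ↦ x_1`
(0-based: `y ↦ x_0`, the first variable). -/
def iota1 (n : ℕ) (p : Polynomial (H k (n-1))) : H k n :=
  p.sum fun i a => shj k (n-1) n (by omega) a * X k n 0 ^ i

/-- The balancing submodule of `H_n ⊗_k H_n` whose quotient is the balanced tensor
product `H_n ι_0 ⊗_{H_{n−1}[y]} ι_1 H_n`. -/
noncomputable def bal (n : ℕ) : Submodule k (H k n ⊗[k] H k n) :=
  Submodule.span k {z | ∃ (a b : H k n) (p : Polynomial (H k (n-1))),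
    z = (a * iota0 k n p) ⊗ₜ[k] b - a ⊗ₜ[k] (iota1 k n p * b)}

/-- A representative in `H_n ⊗_k H_n` of the element
`Δ_n = Σ_{r=1}^{n} (τ_r ⋯ τ_{n−1}) ⊗ (τ_1 ⋯ τ_{r−1})` (1-based indices). -/
noncomputable def deltaT (n : ℕ) : H k n ⊗[k] H k n :=
  ∑ r ∈ Finset.range n, chain k n r (n-1) ⊗ₜ[k] chain k n 0 r

/-- A representative of `p · Δ_n` for `p ∈ H_n[y]` acting through the left
`H_n[y]`-module structure of `H_n ι_0 ⊗_{H_{n−1}[y]} ι_1 H_n` (on the left factor,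
`y` acting via `x_n`, i.e. a coefficient `c·y^i` sends `m ⊗ h` to `c·m·x_n^i ⊗ h`). -/
noncomputable def actDelta (n : ℕ) (p : Polynomial (H k n)) : H k n ⊗[k] H k n :=
  ∑ r ∈ Finset.range n,
    (p.sum fun i c => c * chain k n r (n-1) * X k n (n-1) ^ i) ⊗ₜ[k] chain k n 0 r

end NilHecke

section CommutingModulo

variable {R A : Type*} [CommRing R] [Ring A] [Algebra R A]

def Subalgebra.commutingModulo (N : Submodule R (A ⊗[R] A))
    (hl : ∀ c, ∀ z ∈ N, (c ⊗ₜ[R] (1 : A)) * z ∈ N) (hr : ∀ c, ∀ z ∈ N, z * ((1 : A) ⊗ₜ[R] c) ∈ N)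
    (Δ : A ⊗[R] A) : Subalgebra R A where
  carrier := {a | (a ⊗ₜ[R] 1) * Δ - Δ * (1 ⊗ₜ[R] a) ∈ N}
  mul_mem' {a b} ha hb := by
    have key : ((a * b) ⊗ₜ[R] (1 : A)) * Δ - Δ * (1 ⊗ₜ[R] (a * b))
        = (a ⊗ₜ[R] 1) * ((b ⊗ₜ[R] 1) * Δ - Δ * (1 ⊗ₜ[R] b))
          + ((a ⊗ₜ[R] 1) * Δ - Δ * (1 ⊗ₜ[R] a)) * (1 ⊗ₜ[R] b) := by
      rw [← mul_one (1 : A), ← Algebra.TensorProduct.tmul_mul_tmul,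
        ← Algebra.TensorProduct.tmul_mul_tmul]
      noncomm_ring
    change _ ∈ N
    rw [key]
    exact N.add_mem (hl a _ hb) (hr b _ ha)
  add_mem' {a b} ha hb := by
    have key : ((a + b) ⊗ₜ[R] (1 : A)) * Δ - Δ * (1 ⊗ₜ[R] (a + b))
        = ((a ⊗ₜ[R] 1) * Δ - Δ * (1 ⊗ₜ[R] a)) + ((b ⊗ₜ[R] 1) * Δ - Δ * (1 ⊗ₜ[R] b)) := by
      rw [TensorProduct.add_tmul, TensorProduct.tmul_add]
      noncomm_ring
    change _ ∈ N
    rw [key]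
    exact N.add_mem ha hb
  algebraMap_mem' r := by
    change (algebraMap R A r ⊗ₜ[R] 1) * Δ - Δ * (1 ⊗ₜ[R] algebraMap R A r) ∈ N
    rw [← Algebra.TensorProduct.algebraMap_apply, ← Algebra.TensorProduct.algebraMap_apply',
      Algebra.commutes, sub_self]
    exact N.zero_mem

end CommutingModulo

namespace NilHecke

variable {k : Type} [Field k] {n : ℕ}

theorem eq_top_of_X_mem_of_T_mem (S : Subalgebra k (H k n))
    (hX : ∀ i < n, X k n i ∈ S) (hT : ∀ i, i + 2 ≤ n → T k n i ∈ S) : S = ⊤ := by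
  refine Algebra.eq_top_iff.2 fun a => ?_
  obtain ⟨x, rfl⟩ := RingQuot.mkAlgHom_surjective k (Rel k n) a
  induction x using FreeAlgebra.induction with
  | grade0 r =>
    rw [AlgHom.commutes]
    exact S.algebraMap_mem r
  | grade1 g =>
    rcases g with i | i
    · change X k n i ∈ S
      by_cases hi : i < n
      · exact hX i hi
      · exact X_kill k n i (by omega) ▸ S.zero_mem
    · change T k n i ∈ S
      by_cases hi : i + 2 ≤ n
      · exact hT i hi
      · exact T_kill k n i (by omega) ▸ S.zero_mem
  | mul x y hx hy =>
    rw [map_mul]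
    exact S.mul_mem hx hy
  | add x y hx hy =>
    rw [map_add]
    exact S.add_mem hx hy

section Chain

theorem chain_of_le {a b : ℕ} (h : b ≤ a) : chain k n a b = 1 := by
  simp [chain, Nat.sub_eq_zero_of_le h]

theorem chain_succ_self (a : ℕ) : chain k n a (a + 1) = T k n a := by
  simp [chain]

theorem chain_mul_chain {a m b : ℕ} (h₁ : a ≤ m) (h₂ : m ≤ b) :
    chain k n a m * chain k n m b = chain k n a b := by
  have h := List.range'_append (s := a) (m := m - a) (n := b - m) (step := 1)
  rw [show a + 1 * (m - a) = m by omega, show m - a + (b - m) = b - a by omega] at h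
  rw [chain, chain, chain, ← List.prod_append, ← List.map_append, h]

theorem T_mul_chain {a b : ℕ} (h : a < b) : T k n a * chain k n (a + 1) b = chain k n a b := by
  rw [← chain_succ_self, chain_mul_chain (by omega) h]

theorem chain_mul_T {a b : ℕ} (h : a ≤ b) : chain k n a b * T k n b = chain k n a (b + 1) := by
  rw [← chain_succ_self, chain_mul_chain h (by omega)]

theorem commute_chain {x : H k n} {a b : ℕ} (h : ∀ i, a ≤ i → i < b → Commute x (T k n i)) :
    Commute x (chain k n a b) :=
  Commute.list_prod_right _ _ fun y hy => by
    obtain ⟨i, hi, rfl⟩ := List.mem_map.1 hy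
    rw [List.mem_range'_1] at hi
    exact h i hi.1 (by omega)

theorem commute_T_chain {j a b : ℕ} (h : b < j ∨ j + 1 < a) :
    Commute (T k n j) (chain k n a b) :=
  commute_chain fun i hi hib => by
    rcases h with h | h
    · exact (T_comm k n i j (by omega)).symm
    · exact T_comm k n j i (by omega)

theorem commute_X_chain {j a b : ℕ} (h : b < j ∨ j < a) :
    Commute (X k n j) (chain k n a b) :=
  commute_chain fun i hi hib => (TX_comm k n i j (by omega) (by omega)).symm

theorem commute_chain_chain {a b c d : ℕ} (h : b < c) :
    Commute (chain k n a b) (chain k n c d) :=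
  commute_chain fun _ hi _ => (commute_T_chain (Or.inl (by omega))).symm

theorem T_succ_mul_chain {a j b : ℕ} (ha : a ≤ j) (hb : j + 2 ≤ b) :
    T k n (j + 1) * chain k n a b = chain k n a b * T k n j := by
  rw [← chain_mul_chain ha (by omega : j ≤ b), ← T_mul_chain (by omega : j < b),
    ← T_mul_chain (by omega : j + 1 < b)]
  calc T k n (j + 1) * (chain k n a j * (T k n j * (T k n (j + 1) * chain k n (j + 2) b)))
      = chain k n a j * (T k n (j + 1) * T k n j * T k n (j + 1) * chain k n (j + 2) b) := by
        rw [← mul_assoc, (commute_T_chain (Or.inl (by omega))).eq]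
        simp only [mul_assoc]
    _ = chain k n a j * (T k n j * T k n (j + 1) * (T k n j * chain k n (j + 2) b)) := by
        rw [← T_braid]
        simp only [mul_assoc]
    _ = chain k n a j * (T k n j * (T k n (j + 1) * chain k n (j + 2) b)) * T k n j := by
        rw [(commute_T_chain (Or.inr (by omega))).eq]
        simp only [mul_assoc]

theorem X_succ_mul_chain {a j b : ℕ} (ha : a ≤ j) (hb : j < b) (hn : j + 1 < n) :
    X k n (j + 1) * chain k n a b
      = chain k n a b * X k n j - chain k n a j * chain k n (j + 1) b := by
  have hXT : X k n (j + 1) * T k n j = T k n j * X k n j - 1 := by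
    rw [← TX k n j hn, sub_sub_cancel]
  rw [← chain_mul_chain ha hb.le, ← T_mul_chain hb]
  calc X k n (j + 1) * (chain k n a j * (T k n j * chain k n (j + 1) b))
      = chain k n a j * ((X k n (j + 1) * T k n j) * chain k n (j + 1) b) := by
        rw [← mul_assoc, (commute_X_chain (Or.inl (by omega))).eq]
        simp only [mul_assoc]
    _ = chain k n a j * (T k n j * (X k n j * chain k n (j + 1) b))
          - chain k n a j * chain k n (j + 1) b := by
        rw [hXT, sub_mul, one_mul, mul_sub, mul_assoc]
    _ = chain k n a j * (T k n j * chain k n (j + 1) b) * X k n j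
          - chain k n a j * chain k n (j + 1) b := by
        rw [(commute_X_chain (Or.inr (by omega))).eq]
        simp only [mul_assoc]

theorem X_mul_chain {a b : ℕ} (hab : a ≤ b) (hb : b < n) :
    X k n a * chain k n a b
      = ∑ m ∈ Finset.Ico a b, chain k n a m * chain k n (m + 1) b + chain k n a b * X k n b := by
  induction b, hab using Nat.le_induction with
  | base => simp [chain_of_le]
  | succ b hab ih =>
    have hXT : T k n b * X k n (b + 1) + 1 = X k n b * T k n b := by
      rw [← XT k n b hb, add_sub_cancel]
    rw [← chain_mul_T hab, ← mul_assoc, ih (by omega), Finset.sum_Ico_succ_top hab,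
      chain_of_le le_rfl, mul_one, add_mul, Finset.sum_mul, mul_assoc, ← hXT]
    simp only [mul_assoc, mul_add, mul_one]
    rw [Finset.sum_congr rfl fun m hm => by rw [chain_mul_T (Finset.mem_Ico.1 hm).2]]
    abel

end Chain

section Embeddings

variable {m : ℕ}

theorem incl_X (h : m ≤ n) {i : ℕ} (hi : i < m) : incl k m n h (X k m i) = X k n i := by
  unfold incl X
  erw [RingQuot.liftAlgHom_mkAlgHom_apply]
  simp [hi]
  rfl

theorem incl_T (h : m ≤ n) {i : ℕ} (hi : i + 1 < m) : incl k m n h (T k m i) = T k n i := by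
  unfold incl T
  erw [RingQuot.liftAlgHom_mkAlgHom_apply]
  simp [hi]
  rfl

theorem shj_X (h : m + 1 ≤ n ∨ m = 0) {i : ℕ} (hi : i < m) :
    shj k m n h (X k m i) = X k n (i + 1) := by
  unfold shj X
  erw [RingQuot.liftAlgHom_mkAlgHom_apply]
  simp [hi]
  rfl

theorem shj_T (h : m + 1 ≤ n ∨ m = 0) {i : ℕ} (hi : i + 1 < m) :
    shj k m n h (T k m i) = T k n (i + 1) := by
  unfold shj T
  erw [RingQuot.liftAlgHom_mkAlgHom_apply]
  simp [hi]
  rfl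

theorem map_chain (f : H k m →ₐ[k] H k n) (c : ℕ)
    (hf : ∀ i, i + 1 < m → f (T k m i) = T k n (i + c)) {a b : ℕ} (hb : b < m) :
    f (chain k m a b) = chain k n (a + c) (b + c) := by
  rcases le_total b a with hba | hab
  · rw [chain_of_le hba, chain_of_le (by omega), map_one]
  induction b, hab using Nat.le_induction with
  | base => rw [chain_of_le le_rfl, chain_of_le le_rfl, map_one]
  | succ b hab ih =>
    rw [← chain_mul_T hab, map_mul, ih (by omega), hf b hb, chain_mul_T (by omega),
      Nat.add_right_comm]

theorem iota0_C (a : H k (n - 1)) :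
    iota0 k n (Polynomial.C a) = incl k (n - 1) n (Nat.sub_le n 1) a := by
  rw [iota0, Polynomial.sum_C_index (by simp), pow_zero, mul_one]

theorem iota0_X : iota0 k n Polynomial.X = X k n (n - 1) := by
  rw [iota0, Polynomial.sum_X_index (by simp), map_one, one_mul, pow_one]

theorem iota1_C (a : H k (n - 1)) :
    iota1 k n (Polynomial.C a) = shj k (n - 1) n (by omega) a := by
  rw [iota1, Polynomial.sum_C_index (by simp), pow_zero, mul_one]

theorem iota1_X : iota1 k n Polynomial.X = X k n 0 := by
  rw [iota1, Polynomial.sum_X_index (by simp), map_one, one_mul, pow_one]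

end Embeddings

section Balanced

noncomputable def balancedMk : H k n ⊗[k] H k n →ₗ[k] (H k n ⊗[k] H k n) ⧸ bal k n :=
  (bal k n).mkQ

theorem balancedMk_eq_iff {x y : H k n ⊗[k] H k n} :
    balancedMk x = balancedMk y ↔ x - y ∈ bal k n :=
  Submodule.Quotient.eq _

theorem balancedMk_iota (p : Polynomial (H k (n - 1))) (a b : H k n) :
    balancedMk ((a * iota0 k n p) ⊗ₜ[k] b) = balancedMk (a ⊗ₜ[k] (iota1 k n p * b)) :=
  balancedMk_eq_iff.2 (Submodule.subset_span ⟨a, b, p, rfl⟩)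

theorem balancedMk_chain {i j : ℕ} (hj : j < n - 1) (a b : H k n) :
    balancedMk ((a * chain k n i j) ⊗ₜ[k] b)
      = balancedMk (a ⊗ₜ[k] (chain k n (i + 1) (j + 1) * b)) := by
  have h := balancedMk_iota (Polynomial.C (chain k (n - 1) i j)) a b
  rwa [iota0_C, iota1_C, map_chain _ 0 (fun _ hi => incl_T _ hi) hj,
    map_chain _ 1 (fun _ hi => shj_T _ hi) hj] at h

theorem balancedMk_T {i : ℕ} (hi : i + 2 < n) (a b : H k n) :
    balancedMk ((a * T k n i) ⊗ₜ[k] b) = balancedMk (a ⊗ₜ[k] (T k n (i + 1) * b)) := by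
  simpa only [chain_succ_self] using balancedMk_chain (i := i) (j := i + 1) (by omega) a b

theorem balancedMk_X {i : ℕ} (hi : i < n - 1) (a b : H k n) :
    balancedMk ((a * X k n i) ⊗ₜ[k] b) = balancedMk (a ⊗ₜ[k] (X k n (i + 1) * b)) := by
  have h := balancedMk_iota (Polynomial.C (X k (n - 1) i)) a b
  rwa [iota0_C, iota1_C, incl_X _ hi, shj_X _ hi] at h

theorem balancedMk_X_last (a b : H k n) :
    balancedMk ((a * X k n (n - 1)) ⊗ₜ[k] b) = balancedMk (a ⊗ₜ[k] (X k n 0 * b)) := by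
  have h := balancedMk_iota Polynomial.X a b
  rwa [iota0_X, iota1_X] at h

theorem tmul_one_mul_mem_bal (c : H k n) {z : H k n ⊗[k] H k n} (hz : z ∈ bal k n) :
    (c ⊗ₜ[k] 1) * z ∈ bal k n := by
  induction hz using Submodule.span_induction with
  | mem z hz =>
    obtain ⟨a, b, p, rfl⟩ := hz
    rw [mul_sub, Algebra.TensorProduct.tmul_mul_tmul, Algebra.TensorProduct.tmul_mul_tmul,
      one_mul, one_mul, ← mul_assoc]
    exact Submodule.subset_span ⟨c * a, b, p, rfl⟩
  | zero => simp
  | add x y _ _ hx hy => simpa only [mul_add] using Submodule.add_mem _ hx hy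
  | smul r x _ hx => simpa only [mul_smul_comm] using Submodule.smul_mem _ r hx

theorem mul_one_tmul_mem_bal (c : H k n) {z : H k n ⊗[k] H k n} (hz : z ∈ bal k n) :
    z * (1 ⊗ₜ[k] c) ∈ bal k n := by
  induction hz using Submodule.span_induction with
  | mem z hz =>
    obtain ⟨a, b, p, rfl⟩ := hz
    rw [sub_mul, Algebra.TensorProduct.tmul_mul_tmul, Algebra.TensorProduct.tmul_mul_tmul,
      mul_one, mul_one, mul_assoc]
    exact Submodule.subset_span ⟨a, b * c, p, rfl⟩
  | zero => simp
  | add x y _ _ hx hy => simpa only [add_mul] using Submodule.add_mem _ hx hy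
  | smul r x _ hx => simpa only [smul_mul_assoc] using Submodule.smul_mem _ r hx

end Balanced

section Generators

theorem balancedMk_T_mul_deltaT_term {j r : ℕ} (hj : j + 2 ≤ n) (hr : r < n) :
    balancedMk ((T k n j * chain k n r (n - 1)) ⊗ₜ[k] chain k n 0 r)
      = balancedMk (chain k n (Equiv.swap j (j + 1) r) (n - 1)
          ⊗ₜ[k] (chain k n 0 (Equiv.swap j (j + 1) r) * T k n j)) := by
  obtain hrj | rfl | rfl | hrj : r < j ∨ r = j ∨ r = j + 1 ∨ j + 2 ≤ r := by omega
  · obtain ⟨i, rfl⟩ : ∃ i, j = i + 1 := ⟨j - 1, by omega⟩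
    rw [Equiv.swap_apply_of_ne_of_ne (by omega) (by omega),
      T_succ_mul_chain (by omega) (by omega), balancedMk_T (by omega),
      (commute_T_chain (Or.inl hrj)).eq]
  · rw [Equiv.swap_apply_left, ← T_mul_chain (by omega : r < n - 1), ← mul_assoc, T_sq,
      ← chain_mul_T (Nat.zero_le r), mul_assoc, T_sq, zero_mul, mul_zero,
      TensorProduct.zero_tmul, TensorProduct.tmul_zero]
  · rw [Equiv.swap_apply_right, T_mul_chain (by omega), chain_mul_T (Nat.zero_le j)]
  · rw [Equiv.swap_apply_of_ne_of_ne (by omega) (by omega),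
      (commute_T_chain (Or.inr (by omega))).eq, balancedMk_T (by omega),
      T_succ_mul_chain (Nat.zero_le j) hrj]

theorem balancedMk_T_mul_deltaT {j : ℕ} (hj : j + 2 ≤ n) :
    balancedMk (∑ r ∈ Finset.range n, (T k n j * chain k n r (n - 1)) ⊗ₜ[k] chain k n 0 r)
      = balancedMk
          (∑ r ∈ Finset.range n, chain k n r (n - 1) ⊗ₜ[k] (chain k n 0 r * T k n j)) := by
  rw [map_sum, map_sum]
  refine (Finset.sum_congr rfl fun r hr =>
    balancedMk_T_mul_deltaT_term hj (Finset.mem_range.1 hr)).trans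
    (Equiv.Perm.sum_comp _ _ (fun r => balancedMk
      (chain k n r (n - 1) ⊗ₜ[k] (chain k n 0 r * T k n j))) fun r hr => ?_)
  rw [Finset.coe_range, Set.mem_Iio]
  by_contra h
  exact hr (Equiv.swap_apply_of_ne_of_ne (by omega) (by omega))

theorem balancedMk_X_mul_deltaT_term_of_lt {j r : ℕ} (hj : j < n) (hr : r < j) :
    balancedMk ((X k n j * chain k n r (n - 1)) ⊗ₜ[k] chain k n 0 r)
      = balancedMk (chain k n r (n - 1) ⊗ₜ[k] (chain k n 0 r * X k n j))
        - balancedMk (chain k n j (n - 1) ⊗ₜ[k] (chain k n 0 r * chain k n (r + 1) j)) := by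
  obtain ⟨i, rfl⟩ : ∃ i, j = i + 1 := ⟨j - 1, by omega⟩
  rw [X_succ_mul_chain (by omega) (by omega) hj, TensorProduct.sub_tmul, map_sub,
    balancedMk_X (by omega), (commute_X_chain (Or.inl hr)).eq,
    (commute_chain_chain (Nat.lt_succ_self i)).eq, balancedMk_chain (by omega),
    (commute_chain_chain (Nat.lt_succ_self r)).eq]

theorem balancedMk_X_mul_deltaT_term_of_gt {j r : ℕ} (hjr : j < r) (hr : r < n) :
    balancedMk ((X k n j * chain k n r (n - 1)) ⊗ₜ[k] chain k n 0 r)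
      = balancedMk (chain k n r (n - 1) ⊗ₜ[k] (chain k n 0 r * X k n j))
        - balancedMk (chain k n r (n - 1) ⊗ₜ[k] (chain k n 0 j * chain k n (j + 1) r)) := by
  rw [(commute_X_chain (Or.inr hjr)).eq, balancedMk_X (by omega),
    X_succ_mul_chain (Nat.zero_le j) hjr (by omega), TensorProduct.tmul_sub, map_sub]

theorem balancedMk_X_mul_deltaT_term_self {j : ℕ} (hj : j < n) :
    balancedMk ((X k n j * chain k n j (n - 1)) ⊗ₜ[k] chain k n 0 j)
      = balancedMk (chain k n j (n - 1) ⊗ₜ[k] (chain k n 0 j * X k n j))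
        + ∑ r ∈ Finset.Ico (j + 1) n,
            balancedMk (chain k n r (n - 1) ⊗ₜ[k] (chain k n 0 j * chain k n (j + 1) r))
        + ∑ r ∈ Finset.range j,
            balancedMk (chain k n j (n - 1) ⊗ₜ[k] (chain k n 0 r * chain k n (r + 1) j)) := by
  have hsum : ∀ m ∈ Finset.Ico j (n - 1),
      balancedMk ((chain k n j m * chain k n (m + 1) (n - 1)) ⊗ₜ[k] chain k n 0 j)
        = balancedMk (chain k n (m + 1) (n - 1)
            ⊗ₜ[k] (chain k n 0 j * chain k n (j + 1) (m + 1))) := fun m hm => by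
    rw [(commute_chain_chain (Nat.lt_succ_self m)).eq,
      balancedMk_chain (Finset.mem_Ico.1 hm).2, (commute_chain_chain (Nat.lt_succ_self j)).eq]
  rw [X_mul_chain (by omega) (by omega), TensorProduct.add_tmul, map_add,
    TensorProduct.sum_tmul, map_sum, Finset.sum_congr rfl hsum, balancedMk_X_last,
    X_mul_chain (Nat.zero_le j) hj, TensorProduct.tmul_add, map_add, TensorProduct.tmul_sum,
    map_sum, ← Finset.range_eq_Ico,
    Finset.sum_Ico_add' (fun r => balancedMk (chain k n r (n - 1)
      ⊗ₜ[k] (chain k n 0 j * chain k n (j + 1) r))), Nat.sub_add_cancel (by omega : 1 ≤ n)]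
  abel

theorem balancedMk_X_mul_deltaT {j : ℕ} (hj : j < n) :
    balancedMk (∑ r ∈ Finset.range n, (X k n j * chain k n r (n - 1)) ⊗ₜ[k] chain k n 0 r)
      = balancedMk
          (∑ r ∈ Finset.range n, chain k n r (n - 1) ⊗ₜ[k] (chain k n 0 r * X k n j)) := by
  rw [map_sum, map_sum]
  have hsplit : ∀ f : ℕ → (H k n ⊗[k] H k n) ⧸ bal k n,
      ∑ r ∈ Finset.range n, f r
        = ∑ r ∈ Finset.range j, f r + (f j + ∑ r ∈ Finset.Ico (j + 1) n, f r) := fun f => by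
    rw [Finset.range_eq_Ico, Finset.range_eq_Ico,
      ← Finset.sum_Ico_consecutive f (Nat.zero_le j) hj.le, Finset.sum_eq_sum_Ico_succ_bot hj]
  rw [hsplit, hsplit,
    Finset.sum_congr rfl fun r hr =>
      balancedMk_X_mul_deltaT_term_of_lt hj (Finset.mem_range.1 hr),
    Finset.sum_congr rfl fun r hr =>
      balancedMk_X_mul_deltaT_term_of_gt (Finset.mem_Ico.1 hr).1 (Finset.mem_Ico.1 hr).2,
    balancedMk_X_mul_deltaT_term_self hj, Finset.sum_sub_distrib, Finset.sum_sub_distrib]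
  abel

end Generators

variable (k n) in
noncomputable def deltaCommutant : Subalgebra k (H k n) :=
  Subalgebra.commutingModulo (bal k n) (fun c _ => tmul_one_mul_mem_bal c)
    (fun c _ => mul_one_tmul_mem_bal c) (deltaT k n)

theorem mem_deltaCommutant_iff {a : H k n} :
    a ∈ deltaCommutant k n ↔
      (∑ r ∈ Finset.range n, (a * chain k n r (n-1)) ⊗ₜ[k] chain k n 0 r)
        - (∑ r ∈ Finset.range n, chain k n r (n-1) ⊗ₜ[k] (chain k n 0 r * a)) ∈ bal k n := by
  change (a ⊗ₜ[k] 1) * deltaT k n - deltaT k n * (1 ⊗ₜ[k] a) ∈ bal k n ↔ _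
  simp only [deltaT, Finset.mul_sum, Finset.sum_mul, Algebra.TensorProduct.tmul_mul_tmul,
    one_mul, mul_one]

/-- `a · Δ_n = Δ_n · a` for all `a ∈ H_n`, in the balanced tensor product
`H_n ι_0 ⊗_{H_{n−1}[y]} ι_1 H_n` (realized as the quotient of `H_n ⊗_k H_n` by the
balancing submodule `bal`): the left action is left multiplication on the first factor and
the right action is right multiplication on the second factor. -/
theorem delta_central (k : Type) [Field k] (n : ℕ) (a : H k n) :
    (∑ r ∈ Finset.range n, (a * chain k n r (n-1)) ⊗ₜ[k] chain k n 0 r)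
      - (∑ r ∈ Finset.range n, chain k n r (n-1) ⊗ₜ[k] (chain k n 0 r * a))
      ∈ bal k n := by
  have hX : ∀ i < n, X k n i ∈ deltaCommutant k n := fun i hi =>
    mem_deltaCommutant_iff.2 (balancedMk_eq_iff.1 (balancedMk_X_mul_deltaT hi))
  have hT : ∀ i, i + 2 ≤ n → T k n i ∈ deltaCommutant k n := fun i hi =>
    mem_deltaCommutant_iff.2 (balancedMk_eq_iff.1 (balancedMk_T_mul_deltaT hi))
  have htop : deltaCommutant k n = ⊤ := eq_top_of_X_mem_of_T_mem _ hX hT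
  exact mem_deltaCommutant_iff.1 (htop ▸ Algebra.mem_top)

end NilHecke
end

section
/- Let U⁺ be the Z[v,v⁻¹]-algebra with basis the divided powers e^{(n)} = eⁿ/[n]_v!, and let V be the free Z[v,v⁻¹]-module with basis b_−, b_+. Define a bilinear form on U⁺ ⊗ V by (v^a e^{(i)} ⊗ b_ε, v^b e^{(j)} ⊗ b_ε) = v^{b−a} δ_{i,j} / ∏_{r=1}^i (1−q^r) for ε ∈ {−,+}, (v^a e^{(i)} ⊗ b_+, v^b e^{(j)} ⊗ b_−) = 0, and (v^a e^{(i)} ⊗ b_−, v^b e^{(j)} ⊗ b_+) = −v^{b−a} δ_{i−1,j} v^{−i} / ∏_{r=1}^{i−1}(1−q^r), where q = v². Then the map sending e^{(i)} ⊗ b_− ↦ [P_i⁺] and e^{(i)} ⊗ b_+ ↦ −v^{−1}[P_{i+1}⁻] rescales the form by 1/(1−q): for all w, w′, ⟨ψ(w), ψ(w′)⟩ = (1/(1−q))·(w, w′), where ⟨[M],[N]⟩ = grdim Hom(M,N) and ⟨P_i⁺, P_j⁺⟩ = ⟨P_{i+1}⁻, P_{j+1}⁻⟩ = δ_{i,j}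 q^{−i(i−1)/2}(1−q)⋯(1−q^i)/(1−q)^{2i+1}, ⟨P_i⁺, P_j⁻⟩ = δ_{i,j} q^{−i(i−1)/2}(1−q)⋯(1−q^i)/(1−q)^{2i}, ⟨P_i⁻, P_j⁺⟩ = 0. -/
/-!
Since `[n]_v = v^{1-n} (1 - qⁿ)/(1 - q)`, the quantum factorial satisfies
`v^{i(i-1)/2} [i]_v! (1 - q)^i = ∏_{r=1}^i (1 - q^r)`. Substituting this product, and
`q^{-i(i-1)/2} = v^{-i(i-1)}`, into both sides of each pairing leaves an identity between
products of nonzero elements of `ℚ(v)`.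
-/

namespace ShapovalovComparison

noncomputable section

/-- The formal variable `v`, inside `ℚ(v)` (in which `ℤ[v,v⁻¹]` and all the displayed
formal series manipulations embed). -/
def v : RatFunc ℚ := RatFunc.X

/-- `q = v²`. -/
def q : RatFunc ℚ := v ^ 2

/-- `[n]_v = (vⁿ − v⁻ⁿ)/(v − v⁻¹)`. -/
def qint (n : ℕ) : RatFunc ℚ := (v ^ n - v⁻¹ ^ n) / (v - v⁻¹)

/-- `[n]_v! = [1]_v ⋯ [n]_v`. -/
def qfact (n : ℕ) : RatFunc ℚ := ∏ m ∈ Finset.range n, qint (m + 1)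

/-- `∏_{r=1}^{i} (1 − q^r)`. -/
def qprod (i : ℕ) : RatFunc ℚ := ∏ r ∈ Finset.range i, (1 - q ^ (r + 1))

/-- Kronecker delta. -/
def δ (i j : ℕ) : RatFunc ℚ := if i = j then 1 else 0

lemma v_ne_zero : v ≠ 0 := RatFunc.X_ne_zero

lemma q_pow_ne_one {n : ℕ} (hn : n ≠ 0) : q ^ n ≠ 1 := by
  have hX : (Polynomial.X : Polynomial ℚ) ^ (2 * n) - Polynomial.C 1 ≠ 0 :=
    Polynomial.X_pow_sub_C_ne_zero (by omega) 1
  contrapose! hX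
  apply RatFunc.algebraMap_injective ℚ
  simpa [q, v, ← pow_mul, ← RatFunc.algebraMap_X, sub_eq_zero] using hX

lemma one_sub_q_pow_ne_zero {n : ℕ} (hn : n ≠ 0) : 1 - q ^ n ≠ 0 :=
  sub_ne_zero.2 (q_pow_ne_one hn).symm

lemma one_sub_q_ne_zero : 1 - q ≠ 0 := by
  simpa using one_sub_q_pow_ne_zero one_ne_zero

lemma qprod_ne_zero (i : ℕ) : qprod i ≠ 0 :=
  Finset.prod_ne_zero_iff.2 fun r _ => one_sub_q_pow_ne_zero r.succ_ne_zero

lemma pow_mul_qint_mul (n : ℕ) : v ^ n * qint (n + 1) * (1 - q) = 1 - q ^ (n + 1) := by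
  have hv := v_ne_zero
  have hq : v ^ 2 - 1 ≠ 0 := fun h => one_sub_q_ne_zero (by rw [q]; linear_combination -h)
  rw [qint, q, inv_pow]
  field_simp
  ring

lemma pow_triangle_mul_qfact_mul (i : ℕ) :
    v ^ (i * (i - 1) / 2) * qfact i * (1 - q) ^ i = qprod i := by
  rw [← Finset.sum_range_id, ← Finset.prod_pow_eq_pow_sum, qfact, Finset.pow_eq_prod_const,
    ← Finset.prod_mul_distrib, ← Finset.prod_mul_distrib, qprod]
  exact Finset.prod_congr rfl fun n _ => pow_mul_qint_mul n

lemma qfact_ne_zero (i : ℕ) : qfact i ≠ 0 := fun h =>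
  qprod_ne_zero i (by rw [← pow_triangle_mul_qfact_mul, h, mul_zero, zero_mul])

lemma q_zpow_neg_triangle (i : ℕ) :
    q ^ (-((i : ℤ) * ((i : ℤ) - 1) / 2)) = ((v ^ (i * (i - 1) / 2)) ^ 2)⁻¹ := by
  have hcast : (i : ℤ) * ((i : ℤ) - 1) / 2 = ((i * (i - 1) / 2 : ℕ) : ℤ) := by
    rcases i with _ | n
    · simp
    · push_cast [Nat.add_sub_cancel]
      ring_nf
  rw [hcast, zpow_neg, zpow_natCast, q, ← pow_mul, ← pow_mul, mul_comm]

lemma same_sign_pairing_eq (i j : ℕ) :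
    δ i j * q ^ (-(i * (i - 1) / 2 : ℤ)) * qprod i / (1 - q) ^ (2 * i + 1)
      = (1 / (1 - q)) * (qfact i) ^ 2 * (δ i j / qprod i) := by
  rcases eq_or_ne i j with rfl | hij
  · have hv := v_ne_zero
    have hF := qfact_ne_zero i
    have ht := one_sub_q_ne_zero
    rw [δ, if_pos rfl, q_zpow_neg_triangle, ← pow_triangle_mul_qfact_mul]
    field_simp
    ring
  · simp [δ, hij]

lemma mixed_sign_pairing_eq {i j : ℕ} (hi : 1 ≤ i) (hj : 1 ≤ j) :
    δ i j * q ^ (-(i * (i - 1) / 2 : ℤ)) * qprod i / (1 - q) ^ (2 * i)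
      = (-v / (1 - q)) * qfact i * qfact (i - 1) *
          (-(δ (i - 1) (j - 1)) * v ^ (-(i : ℤ)) / qprod (i - 1)) := by
  rcases eq_or_ne i j with rfl | hij
  · obtain ⟨n, rfl⟩ : ∃ n, i = n + 1 := ⟨i - 1, by omega⟩
    have hv := v_ne_zero
    have hF := qfact_ne_zero n
    have ht := one_sub_q_ne_zero
    have htri : (n + 1) * n / 2 = n * (n - 1) / 2 + n := by
      rw [← Finset.sum_range_id, ← Finset.sum_range_succ, Finset.sum_range_id,
        Nat.add_sub_cancel]
    rw [δ, δ, if_pos rfl, if_pos rfl, q_zpow_neg_triangle, ← pow_triangle_mul_qfact_mul,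
      ← pow_triangle_mul_qfact_mul, Nat.add_sub_cancel, htri, zpow_neg, zpow_natCast]
    field_simp
    ring
  · have hij' : i - 1 ≠ j - 1 := by omega
    simp [δ, hij, hij']

/-- The conjuncts compare the pairings of `ψ(e^{(i)} ⊗ b_∓)` with the form on the basis pairs
`(−,−)`, `(+,+)`, `(−,+)`, `(+,−)`, the factorials coming from `eⁱ = [i]_v! e^{(i)}`. -/
theorem shapovalov_rescaling (i j : ℕ) :
    (δ i j * q ^ (-(i * (i - 1) / 2 : ℤ)) * qprod i / (1 - q) ^ (2 * i + 1)
        = (1 / (1 - q)) * (qfact i) ^ 2 * (δ i j / qprod i)) ∧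
    (δ i j * q ^ (-(i * (i - 1) / 2 : ℤ)) * qprod i / (1 - q) ^ (2 * i + 1)
        = (1 / (1 - q)) * (qfact i) ^ 2 * (δ i j / qprod i)) ∧
    (1 ≤ i → 1 ≤ j →
      δ i j * q ^ (-(i * (i - 1) / 2 : ℤ)) * qprod i / (1 - q) ^ (2 * i)
        = (-v / (1 - q)) * qfact i * qfact (i - 1) *
            (-(δ (i - 1) (j - 1)) * v ^ (-(i : ℤ)) / qprod (i - 1))) ∧
    ((0 : RatFunc ℚ) = (1 / (1 - q)) * 0) :=
  ⟨same_sign_pairing_eq i j, same_sign_pairing_eq i j, mixed_sign_pairing_eq, (mul_zero _).symm⟩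

end

end ShapovalovComparison
end
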